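/- arXiv:2605.05613 — 7 statements merged into one kernel-verified Lean document; each statement's English description precedes it below -/
import Mathlib

section
/- Let p be a prime, m and k positive integers, q = p^m, and d = gcd(m,k). For any a, b in F_q with a ≠ 0 and b ≠ 0, the polynomial f(x) = x^{p^k+1} + a x + b has exactly 0, 1, 2, or p^d + 1 roots in F_q. -/
/-!
Write `Q = p ^ k` and fix a root `x₀` of `f = X ^ (Q + 1) + a X + b` (without one there are
no roots). Since `x₀ (x₀ ^ Q + a) = -b`, both `x₀` and `c = x₀ ^ Q + a` are nonzero. The
substitution `x = x₀ + w⁻¹` turns the other roots into the solutions of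
`c w ^ Q + x₀ w = -1`, whose left-hand side is additive because of the Frobenius. So these
solutions are either absent or a coset of the kernel, which is `0` together with the solutions
of `u ^ (Q - 1) = -x₀ / c`; these in turn are either absent or a coset of the `(Q - 1)`-th
roots of unity in `F`, a cyclic group of order `gcd (Q - 1, p ^ m - 1) = p ^ gcd m k - 1`.
Counting `x₀` and `0`, the number of roots is `0`, `1`, `2` or `p ^ gcd m k + 1`.
-/

open Set

@[to_additive]
theorem MonoidHom.preimage_singleton_eq_empty_or_ncard_eq {G H : Type*} [Group G] [Group H]
    (f : G →* H) (h : H) : f ⁻¹' {h} = ∅ ∨ (f ⁻¹' {h}).ncard = Nat.card f.ker := by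
  obtain ⟨g, rfl⟩ | hh := em (h ∈ range f)
  · exact .inr <| by rw [← Nat.card_coe_set_eq]; exact Nat.card_congr (f.fiberEquivKer g)
  · exact .inl <| preimage_singleton_eq_empty.mpr hh

theorem FiniteField.setOf_pow_eq_eq_empty_or_ncard_eq {F : Type*} [Field F] [Finite F] {n : ℕ}
    (hn : n ≠ 0) {e : F} (he : e ≠ 0) :
    {x : F | x ^ n = e} = ∅ ∨ {x : F | x ^ n = e}.ncard = (Nat.card F - 1).gcd n := by
  have hval : {x : F | x ^ n = e} = Units.val '' (powMonoidHom n ⁻¹' {Units.mk0 e he}) := by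
    ext x
    refine ⟨fun hx => ?_, ?_⟩
    · have hx0 : x ≠ 0 := by rintro rfl; exact he (by simpa [hn] using hx.symm)
      exact ⟨Units.mk0 x hx0, Units.ext (by simpa using hx), rfl⟩
    · rintro ⟨u, hu, rfl⟩
      simpa using congrArg Units.val hu
  rw [hval, image_eq_empty, ncard_image_of_injective _ Units.val_injective,
    ← Nat.card_units, ← IsCyclic.card_powMonoidHom_ker]
  exact MonoidHom.preimage_singleton_eq_empty_or_ncard_eq _ _

theorem setOf_mul_pow_add_mul_eq_zero {F : Type*} [Field F] {Q : ℕ} (hQ : Q ≠ 0) {c : F}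
    (hc : c ≠ 0) (d : F) :
    {u : F | c * u ^ Q + d * u = 0} = insert 0 {u | u ^ (Q - 1) = -d / c} := by
  ext u
  obtain rfl | hu := eq_or_ne u 0
  · simp [hQ]
  have hsplit : c * u ^ Q + d * u = u * c * (u ^ (Q - 1) - -d / c) := by
    rw [← pow_sub_one_mul hQ]
    field_simp
    ring
  simp [hsplit, hu, hc, sub_eq_zero]

section Linearized

variable {F : Type*} [Field F] (p : ℕ) [ExpChar F p] (k : ℕ)

def linearizedHom (c d : F) : F →+ F :=
  (AddMonoidHom.mulLeft c).comp (iterateFrobenius F p k).toAddMonoidHom + AddMonoidHom.mulLeft d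

@[simp]
theorem linearizedHom_apply (c d x : F) : linearizedHom p k c d x = c * x ^ p ^ k + d * x := rfl

variable {p k}

theorem eval_add_inv_eq_mul_linearizedHom {a b x₀ : F}
    (hx₀ : x₀ ^ (p ^ k + 1) + a * x₀ + b = 0) (w : F) :
    (x₀ + w⁻¹) ^ (p ^ k + 1) + a * (x₀ + w⁻¹) + b =
      w⁻¹ ^ (p ^ k + 1) * (linearizedHom p k (x₀ ^ p ^ k + a) x₀ w + 1) := by
  obtain rfl | hw := eq_or_ne w 0
  · simpa using hx₀
  have hinv : w⁻¹ * w = 1 := inv_mul_cancel₀ hw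
  have hinv_pow : w⁻¹ ^ p ^ k * w ^ p ^ k = 1 := by rw [← mul_pow, hinv, one_pow]
  rw [linearizedHom_apply, pow_succ (x₀ + w⁻¹), add_pow_expChar_pow]
  linear_combination hx₀ - (x₀ ^ p ^ k + a) * w⁻¹ * hinv_pow - x₀ * w⁻¹ ^ p ^ k * hinv

theorem setOf_root_eq_insert_image_inv {a b x₀ : F}
    (hx₀ : x₀ ^ (p ^ k + 1) + a * x₀ + b = 0) :
    {x : F | x ^ (p ^ k + 1) + a * x + b = 0} =
      insert x₀ ((x₀ + ·⁻¹) '' (linearizedHom p k (x₀ ^ p ^ k + a) x₀ ⁻¹' {-1})) :=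
    by
  ext x
  obtain rfl | hx := eq_or_ne x x₀
  · simpa using hx₀
  have hx' : x = x₀ + (x - x₀)⁻¹⁻¹ := by rw [inv_inv]; ring
  simp only [mem_ofPred_eq, mem_insert_iff, hx, false_or, mem_image, mem_preimage,
    mem_singleton_iff]
  constructor
  · intro hroot
    refine ⟨(x - x₀)⁻¹, ?_, hx'.symm⟩
    rw [hx', eval_add_inv_eq_mul_linearizedHom hx₀, inv_inv] at hroot
    have hw := (mul_eq_zero.mp hroot).resolve_left (pow_ne_zero _ (sub_ne_zero.mpr hx))
    exact eq_neg_of_add_eq_zero_left hw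
  · rintro ⟨w, hw, rfl⟩
    rw [eval_add_inv_eq_mul_linearizedHom hx₀, hw, neg_add_cancel, mul_zero]

theorem ncard_setOf_root_eq [Finite F] {a b x₀ : F}
    (hx₀ : x₀ ^ (p ^ k + 1) + a * x₀ + b = 0) :
    {x : F | x ^ (p ^ k + 1) + a * x + b = 0}.ncard =
      (linearizedHom p k (x₀ ^ p ^ k + a) x₀ ⁻¹' {-1}).ncard + 1 := by
  have hinj : Function.Injective (x₀ + ·⁻¹ : F → F) := fun u v h => by simpa using h
  have hx₀_notMem :
      x₀ ∉ (x₀ + ·⁻¹) '' (linearizedHom p k (x₀ ^ p ^ k + a) x₀ ⁻¹' {-1}) := by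
    rintro ⟨w, hw, hw'⟩
    obtain rfl : w = 0 := by simpa using hw'
    rw [mem_preimage, map_zero, mem_singleton_iff, zero_eq_neg] at hw
    exact one_ne_zero hw
  rw [setOf_root_eq_insert_image_inv hx₀, ncard_insert_of_notMem hx₀_notMem,
    ncard_image_of_injective _ hinj]

theorem card_ker_linearizedHom [Finite F] (hQ : 1 < p ^ k) {c d : F} (hc : c ≠ 0)
    (hd : d ≠ 0) :
    Nat.card (linearizedHom p k c d).ker = {u : F | u ^ (p ^ k - 1) = -d / c}.ncard + 1 := by
  have hker : ((linearizedHom p k c d).ker : Set F) = {u | c * u ^ p ^ k + d * u = 0} := by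
    ext; simp
  have h0 : (0 : F) ∉ {u : F | u ^ (p ^ k - 1) = -d / c} := by
    simp [zero_pow (Nat.sub_ne_zero_of_lt hQ), hc, hd, eq_comm (a := (0 : F))]
  rw [← SetLike.coe_sort_coe, Nat.card_coe_set_eq, hker,
    setOf_mul_pow_add_mul_eq_zero (by omega) hc, ncard_insert_of_notMem h0]

end Linearized

theorem stmt_0_general (p m k : ℕ) (hp : p.Prime) (hk : 0 < k)
    (F : Type*) [Field F] [Fintype F] (hF : Fintype.card F = p ^ m)
    (a b : F) (hb : b ≠ 0) :
    Set.ncard {x : F | x ^ (p ^ k + 1) + a * x + b = 0} ∈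
      ({0, 1, 2, p ^ Nat.gcd m k + 1} : Set ℕ) := by
  have := Fact.mk hp
  have := charP_of_card_eq_prime_pow hF
  obtain hR | ⟨x₀, hx₀ : x₀ ^ (p ^ k + 1) + a * x₀ + b = 0⟩ :=
    {x : F | x ^ (p ^ k + 1) + a * x + b = 0}.eq_empty_or_nonempty
  · simp [hR]
  obtain ⟨hx₀_ne, hc⟩ : x₀ ≠ 0 ∧ x₀ ^ p ^ k + a ≠ 0 := by
    refine mul_ne_zero_iff.mp (?_ : x₀ * (x₀ ^ p ^ k + a) ≠ 0)
    rw [show x₀ * (x₀ ^ p ^ k + a) = -b by linear_combination hx₀]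
    exact neg_ne_zero.mpr hb
  have hQ : 1 < p ^ k := Nat.one_lt_pow hk.ne' hp.one_lt
  rw [ncard_setOf_root_eq hx₀]
  obtain hS | hS :=
    (linearizedHom p k (x₀ ^ p ^ k + a) x₀).preimage_singleton_eq_empty_or_ncard_eq (-1)
  · simp [hS]
  rw [hS, card_ker_linearizedHom hQ hc hx₀_ne]
  obtain hT | hT := FiniteField.setOf_pow_eq_eq_empty_or_ncard_eq (Nat.sub_ne_zero_of_lt hQ)
    (div_ne_zero (neg_ne_zero.mpr hx₀_ne) hc)
  · simp [hT]
  rw [hT, Nat.card_eq_fintype_card, hF, Nat.pow_sub_one_gcd_pow_sub_one]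
  simp [Nat.sub_add_cancel (Nat.one_le_pow _ _ hp.pos)]

theorem stmt_0 (p m k : ℕ) (hp : p.Prime) (hm : 0 < m) (hk : 0 < k)
    (F : Type*) [Field F] [Fintype F] (hF : Fintype.card F = p ^ m)
    (a b : F) (ha : a ≠ 0) (hb : b ≠ 0) :
    Set.ncard {x : F | x ^ (p ^ k + 1) + a * x + b = 0} ∈
      ({0, 1, 2, p ^ Nat.gcd m k + 1} : Set ℕ) :=
  stmt_0_general p m k hp hk F hF a b hb
end

section
/- Let p be a prime, m, k positive integers, q = p^m, and U_{q+1} = {x in F_{q^2} : x^{q+1} = 1}. For any a, b in F_{q^2} with (a,b) ≠ (0,0), the number of solutions x in U_{q+1} of b x^{p^k+1} + a x^{p^k} + a^q x + b^q = 0 is 0, 1, 2, or p^{gcd(k,m)} + 1. -/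
/-!
If `x₁ ≠ x₂` are two solutions, the substitution `y = (x - x₁) / (x - x₂)` turns both the
condition `x ^ (q + 1) = 1` and the equation itself into eigen-equations `y ^ q = μ y`,
`y ^ (p ^ k) = ν y`. The common solutions of such a pair are either `{0}` or a line
`y₀ • F_{p ^ d}` over the common fixed field of the two Frobenius powers, `d = gcd k m`; so
besides `x₁, x₂` there are `0` or `p ^ d - 1` further solutions. The substitution needs
`b x₁ + a ≠ 0`, which can only fail when `a ^ (q + 1) = b ^ (q + 1)`; then the equation
factors as `(b x + a) (b x ^ (p ^ k) + a ^ q) = 0` and has at most two roots.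
-/

open Function

theorem pow_pow_eq_self_and_iff {M : Type*} [Monoid M] (p k m : ℕ) (s : M) :
    s ^ p ^ k = s ∧ s ^ p ^ m = s ↔ s ^ p ^ Nat.gcd k m = s := by
  have periodic_iff (n : ℕ) : IsPeriodicPt (· ^ p) n s ↔ s ^ p ^ n = s := by
    rw [IsPeriodicPt, IsFixedPt, pow_iterate]
  simp only [← periodic_iff]
  exact ⟨fun ⟨hk, hm⟩ ↦ hk.gcd hm,
    fun h ↦ ⟨h.trans_dvd (Nat.gcd_dvd_left k m), h.trans_dvd (Nat.gcd_dvd_right k m)⟩⟩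

namespace FiniteField

variable {F : Type*} [Field F] [Fintype F]

theorem exists_isPrimitiveRoot_of_dvd {n : ℕ} (hn : n ∣ Fintype.card F - 1) :
    ∃ ζ : F, IsPrimitiveRoot ζ n := by
  classical
  obtain ⟨g, hg⟩ := IsCyclic.exists_ofOrder_eq_natCard (α := Fˣ)
  rw [Nat.card_eq_fintype_card, Fintype.card_units] at hg
  rw [← hg] at hn
  refine ⟨(g ^ (orderOf g / n) : Fˣ), IsPrimitiveRoot.coe_units_iff.mpr ?_⟩
  simpa only [orderOf_pow_orderOf_div (orderOf_pos g).ne' hn]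
    using IsPrimitiveRoot.orderOf (g ^ (orderOf g / n))

theorem ncard_setOf_pow_eq_one {n : ℕ} (hn₀ : n ≠ 0) (hn : n ∣ Fintype.card F - 1) :
    {s : F | s ^ n = 1}.ncard = n := by
  classical
  obtain ⟨ζ, hζ⟩ := exists_isPrimitiveRoot_of_dvd hn
  have : {s : F | s ^ n = 1} = Polynomial.nthRootsFinset n (1 : F) := by
    ext s
    simp [Polynomial.mem_nthRootsFinset (Nat.pos_of_ne_zero hn₀)]
  rw [this, Set.ncard_coe_finset, hζ.card_nthRootsFinset]

theorem ncard_setOf_pow_pow_eq_self {p n d : ℕ} (hp : 1 < p) (hd₀ : d ≠ 0) (hd : d ∣ n)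
    (hF : Fintype.card F = p ^ n) : {s : F | s ^ p ^ d = s}.ncard = p ^ d := by
  have hpd : 1 < p ^ d := Nat.one_lt_pow hd₀ hp
  have hsplit : {s : F | s ^ p ^ d = s} = insert 0 {s | s ^ (p ^ d - 1) = 1} := by
    ext s
    rcases eq_or_ne s 0 with rfl | hs
    · simp [hd₀, Nat.ne_zero_of_lt hp]
    · have : s ^ p ^ d = s ^ (p ^ d - 1) * s := by rw [← pow_succ, Nat.sub_add_cancel hpd.le]
      simp [hs, this]
  rw [hsplit, Set.ncard_insert_of_notMem (by simp [(Nat.sub_pos_of_lt hpd).ne']),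
    ncard_setOf_pow_eq_one (Nat.sub_pos_of_lt hpd).ne'
      (hF ▸ Nat.pow_sub_one_dvd_pow_sub_one p hd), Nat.sub_add_cancel hpd.le]

end FiniteField

section

variable {F : Type*} [Field F]

-- the image of `x` under the Möbius map sending `x₁, x₂, ∞` to `0, ∞, 1`
def crossRatio (x₁ x₂ x : F) : F := (x - x₁) / (x - x₂)

def crossRatioInv (x₁ x₂ y : F) : F := (x₂ * y - x₁) / (y - 1)

section CrossRatio

variable {x₁ x₂ x y : F}

theorem crossRatioInv_sub_right (hy : y ≠ 1) :
    crossRatioInv x₁ x₂ y - x₂ = (x₂ - x₁) / (y - 1) := by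
  have : y - 1 ≠ 0 := sub_ne_zero.mpr hy
  rw [crossRatioInv]
  field_simp
  ring

theorem crossRatioInv_ne (h₁₂ : x₁ ≠ x₂) (hy : y ≠ 1) : crossRatioInv x₁ x₂ y ≠ x₂ := by
  rw [Ne, ← sub_eq_zero, crossRatioInv_sub_right hy]
  exact div_ne_zero (sub_ne_zero.mpr h₁₂.symm) (sub_ne_zero.mpr hy)

theorem crossRatio_crossRatioInv (h₁₂ : x₁ ≠ x₂) (hy : y ≠ 1) :
    crossRatio x₁ x₂ (crossRatioInv x₁ x₂ y) = y := by
  have : y - 1 ≠ 0 := sub_ne_zero.mpr hy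
  have : x₂ - x₁ ≠ 0 := sub_ne_zero.mpr h₁₂.symm
  rw [crossRatio, crossRatioInv_sub_right hy, crossRatioInv]
  field_simp
  ring

theorem crossRatio_ne_one (h₁₂ : x₁ ≠ x₂) (hx : x ≠ x₂) : crossRatio x₁ x₂ x ≠ 1 := by
  rw [crossRatio, Ne, div_eq_one_iff_eq (sub_ne_zero.mpr hx), sub_right_inj]
  exact h₁₂

theorem crossRatioInv_crossRatio (h₁₂ : x₁ ≠ x₂) (hx : x ≠ x₂) :
    crossRatioInv x₁ x₂ (crossRatio x₁ x₂ x) = x := by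
  have hx' : x - x₂ ≠ 0 := sub_ne_zero.mpr hx
  rw [crossRatioInv, div_eq_iff (sub_ne_zero.mpr (crossRatio_ne_one h₁₂ hx)), crossRatio]
  field_simp
  ring

theorem ncard_eq_ncard_add_one_of_crossRatio [Finite F] {S T : Set F} (h₁₂ : x₁ ≠ x₂)
    (hx₂ : x₂ ∈ S) (hT : 1 ∉ T) (hST : ∀ x ≠ x₂, x ∈ S ↔ crossRatio x₁ x₂ x ∈ T) :
    S.ncard = T.ncard + 1 := by
  have hT₁ {y} (hy : y ∈ T) : y ≠ 1 := ne_of_mem_of_not_mem hy hT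
  have hS : S = insert x₂ (crossRatioInv x₁ x₂ '' T) := by
    ext x
    refine ⟨fun hx ↦ ?_, ?_⟩
    · rcases eq_or_ne x x₂ with rfl | hx₂'
      · exact Set.mem_insert _ _
      exact Set.mem_insert_of_mem _
        ⟨_, (hST x hx₂').mp hx, crossRatioInv_crossRatio h₁₂ hx₂'⟩
    · rintro (rfl | ⟨y, hy, rfl⟩)
      · exact hx₂
      · rwa [hST _ (crossRatioInv_ne h₁₂ (hT₁ hy)), crossRatio_crossRatioInv h₁₂ (hT₁ hy)]
  have hinj : Set.InjOn (crossRatioInv x₁ x₂) T := fun y hy y' hy' e ↦ by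
    rw [← crossRatio_crossRatioInv h₁₂ (hT₁ hy), e, crossRatio_crossRatioInv h₁₂ (hT₁ hy')]
  have hx₂T : x₂ ∉ crossRatioInv x₁ x₂ '' T := fun ⟨y, hy, e⟩ ↦ crossRatioInv_ne h₁₂ (hT₁ hy) e
  rw [hS, Set.ncard_insert_of_notMem hx₂T, hinj.ncard_image]

end CrossRatio

theorem ncard_setOf_map_eq_mul_and_map_eq_mul (σ τ : F →+* F) (μ ν : F) :
    {y | σ y = μ * y ∧ τ y = ν * y}.ncard = 1 ∨
      {y | σ y = μ * y ∧ τ y = ν * y}.ncard = {s | σ s = s ∧ τ s = s}.ncard := by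
  by_cases h : ∃ y₀ ∈ {y | σ y = μ * y ∧ τ y = ν * y}, y₀ ≠ 0
  · obtain ⟨y₀, ⟨hσ₀, hτ₀⟩, hy₀⟩ := h
    have hμ : μ ≠ 0 := left_ne_zero_of_mul (hσ₀ ▸ (map_ne_zero σ).mpr hy₀)
    have hν : ν ≠ 0 := left_ne_zero_of_mul (hτ₀ ▸ (map_ne_zero τ).mpr hy₀)
    right
    suffices {y | σ y = μ * y ∧ τ y = ν * y} = (y₀ * ·) '' {s | σ s = s ∧ τ s = s} by
      rw [this, Set.ncard_image_of_injective _ (mul_right_injective₀ hy₀)]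
    ext y
    refine ⟨fun ⟨hσ, hτ⟩ ↦ ⟨y / y₀, ?_, mul_div_cancel₀ y hy₀⟩, ?_⟩
    · simp only [Set.mem_ofPred_eq, map_div₀, hσ, hσ₀, hτ, hτ₀, mul_div_mul_left _ _ hμ,
        mul_div_mul_left _ _ hν, and_self]
    · rintro ⟨s, ⟨hσ, hτ⟩, rfl⟩
      simp only [Set.mem_ofPred_eq, map_mul, hσ, hτ, hσ₀, hτ₀, mul_assoc, and_self]
  · left
    rw [Set.ncard_eq_one]
    refine ⟨0, Set.eq_singleton_iff_unique_mem.mpr ⟨by simp, fun y hy ↦ ?_⟩⟩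
    by_contra hy₀
    exact h ⟨y, hy, hy₀⟩

def twistedQuadratic (σ : F →+* F) (a b c d x : F) : F :=
  b * x * σ x + a * σ x + c * x + d

section TwistedQuadratic

variable (σ : F →+* F) {a b c d x₁ x₂ x : F}

theorem ncard_setOf_twistedQuadratic_eq_zero_le_two (hb : b ≠ 0) (h : a * c = b * d) :
    {x | twistedQuadratic σ a b c d x = 0}.ncard ≤ 2 := by
  have hsub : {x | twistedQuadratic σ a b c d x = 0} ⊆ {-a / b} ∪ {x | b * σ x + c = 0} := by
    intro x hx
    have : (b * x + a) * (b * σ x + c) = 0 := by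
      rw [Set.mem_ofPred_eq, twistedQuadratic] at hx
      linear_combination b * hx + h
    refine (mul_eq_zero.mp this).imp (fun h₁ ↦ ?_) id
    rw [Set.mem_singleton_iff, eq_div_iff hb]
    linear_combination h₁
  have hsub₂ : {x | b * σ x + c = 0}.Subsingleton := fun x hx y hy ↦
    σ.injective (mul_left_cancel₀ hb (add_right_cancel (hx.trans hy.symm)))
  calc {x | twistedQuadratic σ a b c d x = 0}.ncard
      ≤ ({-a / b} ∪ {x | b * σ x + c = 0}).ncard :=
        Set.ncard_le_ncard hsub ((Set.finite_singleton _).union hsub₂.finite)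
    _ ≤ 1 + 1 := (Set.ncard_union_le _ _).trans (add_le_add (Set.ncard_singleton _).le
        ((Set.ncard_le_one hsub₂.finite).mpr hsub₂))

theorem twistedQuadratic_eq_zero_iff (h₁ : twistedQuadratic σ a b c d x₁ = 0)
    (h₂ : twistedQuadratic σ a b c d x₂ = 0) (h₁₂ : x₁ ≠ x₂) (hx₁ : b * x₁ + a ≠ 0)
    (hx : x ≠ x₂) :
    twistedQuadratic σ a b c d x = 0 ↔
      σ (crossRatio x₁ x₂ x) = (b * x₂ + a) / (b * x₁ + a) * crossRatio x₁ x₂ x := by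
  have hσx : σ x - σ x₂ ≠ 0 := sub_ne_zero.mpr (σ.injective.ne hx)
  have hx₂ : x - x₂ ≠ 0 := sub_ne_zero.mpr hx
  simp only [twistedQuadratic, crossRatio] at *
  rw [map_div₀, map_sub, map_sub, div_mul_div_comm, div_eq_div_iff hσx (mul_ne_zero hx₁ hx₂)]
  constructor
  · intro h
    linear_combination (x₁ - x₂) * h - (x - x₂) * h₁ + (x - x₁) * h₂
  · intro h
    refine (mul_eq_zero.mp ?_).resolve_left (sub_ne_zero.mpr h₁₂)
    linear_combination h + (x - x₂) * h₁ - (x - x₁) * h₂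

theorem mul_map_eq_one_iff (h₁ : x₁ * σ x₁ = 1) (h₂ : x₂ * σ x₂ = 1) (h₁₂ : x₁ ≠ x₂)
    (hx : x ≠ x₂) :
    x * σ x = 1 ↔ σ (crossRatio x₁ x₂ x) = x₂ / x₁ * crossRatio x₁ x₂ x := by
  have key := twistedQuadratic_eq_zero_iff σ (a := 0) (b := 1) (c := 0) (d := -1)
    (by simp [twistedQuadratic, h₁]) (by simp [twistedQuadratic, h₂]) h₁₂
    (by simpa using left_ne_zero_of_mul_eq_one h₁) hx
  simpa [twistedQuadratic, ← sub_eq_add_neg, sub_eq_zero] using key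

theorem mul_add_ne_zero_of_mul_map_eq_one (hx : x * σ x = 1) (hab : σ a * a ≠ σ b * b) :
    b * x + a ≠ 0 := by
  intro h
  obtain rfl : a = -(b * x) := by linear_combination h
  apply hab
  simp only [map_neg, map_mul]
  linear_combination (σ b * b) * hx

theorem ncard_setOf_twistedQuadratic_map_eq_zero_le_two (τ : F →+* F) (hab : (a, b) ≠ (0, 0))
    (h : σ a * a = σ b * b) : {x | twistedQuadratic τ a b (σ a) (σ b) x = 0}.ncard ≤ 2 := by
  have hb : b ≠ 0 := by
    rintro rfl
    simp_all
  exact ncard_setOf_twistedQuadratic_eq_zero_le_two τ hb (by linear_combination h)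

theorem ncard_setOf_mul_map_eq_one_and_twistedQuadratic_eq_zero [Finite F] (τ : F →+* F)
    (hab : σ a * a ≠ σ b * b)
    (h : 1 < {x | x * σ x = 1 ∧ twistedQuadratic τ a b (σ a) (σ b) x = 0}.ncard) :
    {x | x * σ x = 1 ∧ twistedQuadratic τ a b (σ a) (σ b) x = 0}.ncard = 2 ∨
      {x | x * σ x = 1 ∧ twistedQuadratic τ a b (σ a) (σ b) x = 0}.ncard =
        {s | σ s = s ∧ τ s = s}.ncard + 1 := by
  obtain ⟨x₁, x₂, hx₁, hx₂, h₁₂⟩ := (Set.one_lt_ncard_iff).mp h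
  set T := {y | σ y = x₂ / x₁ * y ∧ τ y = (b * x₂ + a) / (b * x₁ + a) * y}
  have hT : 1 ∉ T := fun h₁ ↦ by
    have hx₁₀ : x₁ ≠ 0 := left_ne_zero_of_mul_eq_one hx₁.1
    have h' := h₁.1
    rw [map_one, mul_one, eq_comm, div_eq_one_iff_eq hx₁₀] at h'
    exact h₁₂ h'.symm
  have hST (x) (hx : x ≠ x₂) := and_congr (mul_map_eq_one_iff σ hx₁.1 hx₂.1 h₁₂ hx)
    (twistedQuadratic_eq_zero_iff τ hx₁.2 hx₂.2 h₁₂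
      (mul_add_ne_zero_of_mul_map_eq_one σ hx₁.1 hab) hx)
  rw [ncard_eq_ncard_add_one_of_crossRatio h₁₂ hx₂ hT hST]
  rcases ncard_setOf_map_eq_mul_and_map_eq_mul σ τ (x₂ / x₁) ((b * x₂ + a) / (b * x₁ + a))
    with h | h <;> rw [h] <;> simp

end TwistedQuadratic

end

theorem stmt_2_general (p m k : ℕ) (hp : p.Prime) (hk : 0 < k)
    (q : ℕ) (hq : q = p ^ m)
    (F : Type*) [Field F] [Fintype F] (hF : Fintype.card F = q ^ 2)
    (a b : F) (hab : (a, b) ≠ (0, 0)) :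
    Set.ncard {x : F | x ^ (q + 1) = 1 ∧
        b * x ^ (p ^ k + 1) + a * x ^ (p ^ k) + a ^ q * x + b ^ q = 0} ∈
      ({0, 1, 2, p ^ Nat.gcd k m + 1} : Set ℕ) := by
  subst hq
  have : Fact p.Prime := ⟨hp⟩
  have : CharP F p := charP_of_card_eq_prime_pow (f := m * 2) (by rw [hF, pow_mul])
  set σ := iterateFrobenius F p m
  set τ := iterateFrobenius F p k
  have hS : {x : F | x ^ (p ^ m + 1) = 1 ∧
      b * x ^ (p ^ k + 1) + a * x ^ (p ^ k) + a ^ p ^ m * x + b ^ p ^ m = 0} =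
      {x | x * σ x = 1 ∧ twistedQuadratic τ a b (σ a) (σ b) x = 0} := by
    ext x
    simp only [Set.mem_ofPred_eq, twistedQuadratic, σ, τ, iterateFrobenius_def]
    rw [pow_succ', pow_succ', mul_assoc]
  have hFix : {s | σ s = s ∧ τ s = s}.ncard = p ^ Nat.gcd k m := by
    rw [← FiniteField.ncard_setOf_pow_pow_eq_self hp.one_lt (Nat.gcd_pos_of_pos_left m hk).ne'
      ((Nat.gcd_dvd_right k m).mul_right 2) (by rw [hF, ← pow_mul])]
    congr 1
    ext s
    rw [Set.mem_ofPred_eq, Set.mem_ofPred_eq, and_comm, ← pow_pow_eq_self_and_iff]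
    rfl
  rw [hS, Set.mem_insert_iff, Set.mem_insert_iff, Set.mem_insert_iff, Set.mem_singleton_iff]
  by_cases hsmall : {x | x * σ x = 1 ∧ twistedQuadratic τ a b (σ a) (σ b) x = 0}.ncard ≤ 2
  · omega
  by_cases hdet : σ a * a = σ b * b
  · exact absurd ((Set.ncard_le_ncard fun x hx ↦ hx.2).trans
      (ncard_setOf_twistedQuadratic_map_eq_zero_le_two σ τ hab hdet)) hsmall
  rcases ncard_setOf_mul_map_eq_one_and_twistedQuadratic_eq_zero σ τ hdet (by omega)
    with h | h <;> omega

theorem stmt_2 (p m k : ℕ) (hp : p.Prime) (hm : 0 < m) (hk : 0 < k)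
    (q : ℕ) (hq : q = p ^ m)
    (F : Type*) [Field F] [Fintype F] (hF : Fintype.card F = q ^ 2)
    (a b : F) (hab : (a, b) ≠ (0, 0)) :
    Set.ncard {x : F | x ^ (q + 1) = 1 ∧
        b * x ^ (p ^ k + 1) + a * x ^ (p ^ k) + a ^ q * x + b ^ q = 0} ∈
      ({0, 1, 2, p ^ Nat.gcd k m + 1} : Set ℕ) :=
  stmt_2_general p m k hp hk q hq F hF a b hab
end

section
/- Let p be a prime, m a positive integer, q = p^m, and r and s in F_q with (r,s) ≠ (0,0). Then the linearized polynomial r y^{p^k} + s y has either exactly 1 or exactly p^{gcd(k,m)} roots in F_q. -/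
/-!
If `r = 0` or `s = 0` the only root is `0`. Otherwise the nonzero roots are the solutions of
`y ^ (p ^ k - 1) = -s / r`; if there is one, `y₀`, they form the coset `y₀ μ` of the group `μ` of
`(p ^ k - 1)`-th roots of unity in the cyclic group `F_qˣ`, and
`|μ| = gcd (p ^ k - 1, p ^ m - 1) = p ^ gcd (k, m) - 1`. Together with `0` this gives `1` or
`p ^ gcd (k, m)` roots.
-/

theorem setOf_pow_eq_eq_image_mul {G₀ : Type*} [CommGroupWithZero G₀] {d : ℕ} {y₀ : G₀}
    (hy₀ : y₀ ≠ 0) : {y : G₀ | y ^ d = y₀ ^ d} = (y₀ * ·) '' {z : G₀ | z ^ d = 1} := by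
  ext y
  refine ⟨fun hy => ⟨y₀⁻¹ * y, ?_, mul_inv_cancel_left₀ hy₀ y⟩, ?_⟩
  · simp only [Set.mem_ofPred_eq] at hy ⊢
    rw [mul_pow, inv_pow, hy, inv_mul_cancel₀ (pow_ne_zero d hy₀)]
  · rintro ⟨z, hz, rfl⟩
    simp only [Set.mem_ofPred_eq] at hz ⊢
    rw [mul_pow, hz, mul_one]

theorem ncard_setOf_pow_eq_eq_zero_or {G₀ : Type*} [CommGroupWithZero G₀] {d : ℕ} (hd : d ≠ 0)
    {c : G₀} (hc : c ≠ 0) :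
    {y : G₀ | y ^ d = c}.ncard = 0 ∨ {y : G₀ | y ^ d = c}.ncard = {z : G₀ | z ^ d = 1}.ncard := by
  rcases Set.eq_empty_or_nonempty {y : G₀ | y ^ d = c} with h | ⟨y₀, rfl : y₀ ^ d = c⟩
  · exact Or.inl (by rw [h, Set.ncard_empty])
  have hy₀ : y₀ ≠ 0 := ne_zero_pow hd hc
  exact Or.inr (by
    rw [setOf_pow_eq_eq_image_mul hy₀, Set.ncard_image_of_injective _ (mul_right_injective₀ hy₀)])

theorem FiniteField.ncard_setOf_pow_eq_one_s3 {K : Type*} [Field K] [Finite K] {d : ℕ}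
    (hd : d ≠ 0) : {z : K | z ^ d = 1}.ncard = (Nat.card K - 1).gcd d := by
  have hunits : {z : K | z ^ d = 1} = Units.val '' ((powMonoidHom d : Kˣ →* Kˣ).ker : Set Kˣ) := by
    ext z
    refine ⟨fun hz => ⟨Units.mk0 z ?_, ?_, rfl⟩, ?_⟩
    · rintro rfl
      simp [zero_pow hd] at hz
    · simp only [SetLike.mem_coe, MonoidHom.mem_ker, powMonoidHom_apply]
      exact Units.ext (by simpa using hz)
    · rintro ⟨u, hu, rfl⟩
      simpa [Units.ext_iff] using hu
  rw [hunits, Set.ncard_image_of_injective _ Units.val_injective, ← Nat.card_coe_set_eq,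
    SetLike.coe_sort_coe, IsCyclic.card_powMonoidHom_ker, Nat.card_units]

theorem setOf_mul_pow_succ_add_mul_eq_zero {K : Type*} [Field K] {r : K} (hr : r ≠ 0) (s : K)
    (n : ℕ) : {y : K | r * y ^ (n + 1) + s * y = 0} = insert 0 {y : K | y ^ n = -s / r} := by
  ext y
  have hfactor : r * y ^ (n + 1) + s * y = (r * y ^ n + s) * y := by ring
  rw [Set.mem_insert_iff, Set.mem_ofPred_eq, Set.mem_ofPred_eq, hfactor, mul_eq_zero, or_comm,
    eq_div_iff hr, mul_comm, eq_neg_iff_add_eq_zero]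

theorem stmt_3_general (p m k : ℕ) (hp : p.Prime) (hk : 0 < k)
    (F : Type*) [Field F] [Fintype F] (hF : Fintype.card F = p ^ m)
    (r s : F) (hrs : (r, s) ≠ (0, 0)) :
    Set.ncard {y : F | r * y ^ (p ^ k) + s * y = 0} = 1 ∨
      Set.ncard {y : F | r * y ^ (p ^ k) + s * y = 0} = p ^ Nat.gcd k m := by
  by_cases hrs₀ : r = 0 ∨ s = 0
  · refine Or.inl (Set.ncard_eq_one.2 ⟨0, ?_⟩)
    ext y
    rcases hrs₀ with rfl | rfl <;> simp_all [hp.ne_zero, hk.ne']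
  push Not at hrs₀
  obtain ⟨hr, hs⟩ := hrs₀
  have hd : p ^ k - 1 ≠ 0 := by have := Nat.one_lt_pow hk.ne' hp.one_lt; omega
  have hc : -s / r ≠ 0 := div_ne_zero (neg_ne_zero.2 hs) hr
  have hroots := setOf_mul_pow_succ_add_mul_eq_zero hr s (p ^ k - 1)
  rw [Nat.sub_add_cancel (Nat.one_le_pow _ _ hp.pos)] at hroots
  have h0 : (0 : F) ∉ {y : F | y ^ (p ^ k - 1) = -s / r} := by simp [zero_pow hd, hc.symm]
  rw [hroots, Set.ncard_insert_of_notMem h0]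
  rcases ncard_setOf_pow_eq_eq_zero_or hd hc with h | h
  · exact Or.inl (by rw [h])
  · right
    rw [h, FiniteField.ncard_setOf_pow_eq_one_s3 hd, Nat.card_eq_fintype_card, hF,
      Nat.pow_sub_one_gcd_pow_sub_one, Nat.gcd_comm, Nat.sub_add_cancel (Nat.one_le_pow _ _ hp.pos)]

theorem stmt_3 (p m k : ℕ) (hp : p.Prime) (hm : 0 < m) (hk : 0 < k)
    (F : Type*) [Field F] [Fintype F] (hF : Fintype.card F = p ^ m)
    (r s : F) (hrs : (r, s) ≠ (0, 0)) :
    Set.ncard {y : F | r * y ^ (p ^ k) + s * y = 0} = 1 ∨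
      Set.ncard {y : F | r * y ^ (p ^ k) + s * y = 0} = p ^ Nat.gcd k m :=
  stmt_3_general p m k hp hk F hF r s hrs
end

section
/- Let q be a prime power, r | (q+1) with ν₂(r) = ν₂(q+1), δ in F_{q^4}^* of order r(q^2+1), λ = δ^{q^2+1}, and T = {δ^{-i} : 0 ≤ i ≤ q^2}. Let f(x) = x^{q+1} on U_{r(q^2+1)}. Then for every y₀ in U_{q^2+1} and every j with 0 ≤ j ≤ r-1, the fiber f^{-1}(y₀) intersects λ^j T in exactly one element. Moreover, if f(x₀) = y₀, then f^{-1}(y₀) = { λ^j x₀ : 0 ≤ j ≤ r-1 }. -/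
/-!
The hypothesis on `ν₂` makes `(q + 1) / r` odd, and `gcd (q + 1) (q ^ 2 + 1) ∣ 2`, so
`gcd (q + 1) (r * (q ^ 2 + 1)) = r`. Hence on the cyclic group `U_{r(q²+1)}` the map `x ↦ x ^ (q + 1)`
has kernel `U_r = ⟨λ⟩`, so its fibres are cosets of `⟨λ⟩`; and `δ⁻¹ ^ (q + 1)` is a primitive
`(q² + 1)`-th root of unity, so `f (λ ^ j * δ⁻¹ ^ i) = (δ⁻¹ ^ (q + 1)) ^ i` takes every value of
`U_{q²+1}` exactly once as `i` runs over `0, …, q²`.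
-/

theorem Nat.gcd_add_one_sq_add_one_dvd_two (q : ℕ) : Nat.gcd (q + 1) (q ^ 2 + 1) ∣ 2 := by
  set d := Nat.gcd (q + 1) (q ^ 2 + 1)
  have h_sq : d ∣ (q ^ 2 + 1) + 2 * q := by
    rw [show q ^ 2 + 1 + 2 * q = (q + 1) * (q + 1) by ring]
    exact (Nat.gcd_dvd_left _ _).mul_right _
  have h_two_mul : d ∣ 2 * q := (Nat.dvd_add_right (Nat.gcd_dvd_right _ _)).mp h_sq
  exact (Nat.dvd_add_right h_two_mul).mp ((Nat.gcd_dvd_left _ _).mul_left 2)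

theorem Nat.gcd_add_one_mul_sq_add_one {q r : ℕ} (hdvd : r ∣ q + 1)
    (hν : padicValNat 2 r = padicValNat 2 (q + 1)) :
    Nat.gcd (q + 1) (r * (q ^ 2 + 1)) = r := by
  obtain ⟨s, hs⟩ := hdvd
  have hr : r ≠ 0 := by rintro rfl; omega
  have hs0 : s ≠ 0 := by rintro rfl; omega
  have hs_odd : ¬ 2 ∣ s := fun h2 => by
    have := one_le_padicValNat_of_dvd hs0 h2
    have := padicValNat.mul (p := 2) hr hs0
    rw [hs] at hν
    omega
  have hcop : Nat.Coprime s (q ^ 2 + 1) := by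
    have h2 : Nat.gcd s (q ^ 2 + 1) ∣ 2 :=
      (Nat.gcd_dvd_gcd_of_dvd_left _ (Dvd.intro_left r hs.symm)).trans
        (Nat.gcd_add_one_sq_add_one_dvd_two q)
    rcases (Nat.dvd_prime Nat.prime_two).mp h2 with h | h
    · exact h
    · exact absurd (h ▸ Nat.gcd_dvd_left s _) hs_odd
  rw [hs, Nat.gcd_mul_left, hcop, mul_one]

theorem IsPrimitiveRoot.pow_of_gcd_eq {M : Type*} [CommMonoid M] {ζ : M} {k r m : ℕ}
    (h : IsPrimitiveRoot ζ (r * m)) (hk : k ≠ 0) (hgcd : Nat.gcd k (r * m) = r) :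
    IsPrimitiveRoot (ζ ^ k) m := by
  have hr : r ≠ 0 := hgcd ▸ Nat.gcd_ne_zero_left hk
  have := IsPrimitiveRoot.orderOf (ζ ^ k)
  rwa [orderOf_pow' ζ hk, ← h.eq_orderOf, Nat.gcd_comm, hgcd,
    Nat.mul_div_cancel_left m (Nat.pos_of_ne_zero hr)] at this

theorem setOf_pow_eq_one_and_pow_eq_pow {F : Type*} [Field F] {N k r : ℕ} {ζ x₀ : F}
    (hζ : IsPrimitiveRoot ζ r) (hgcd : Nat.gcd k N = r) (hN : N ≠ 0) (hx₀ : x₀ ^ N = 1) :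
    {x : F | x ^ N = 1 ∧ x ^ k = x₀ ^ k} = {x | ∃ j < r, x = ζ ^ j * x₀} := by
  have hx₀0 : x₀ ≠ 0 := by rintro rfl; simp [hN] at hx₀
  ext x
  constructor
  · rintro ⟨hxN, hxk⟩
    have hquot : (x / x₀) ^ r = 1 := by
      rw [← hgcd, ← orderOf_dvd_iff_pow_eq_one]
      refine Nat.dvd_gcd (orderOf_dvd_of_pow_eq_one ?_) (orderOf_dvd_of_pow_eq_one ?_)
      · rw [div_pow, hxk, div_self (pow_ne_zero _ hx₀0)]
      · rw [div_pow, hxN, hx₀, div_one]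
    have : NeZero r := ⟨hgcd ▸ Nat.gcd_ne_zero_right hN⟩
    obtain ⟨j, hj, hζj⟩ := hζ.eq_pow_of_pow_eq_one hquot
    exact ⟨j, hj, by rw [hζj, div_mul_cancel₀ x hx₀0]⟩
  · rintro ⟨j, -, rfl⟩
    have hζ_pow {n : ℕ} (hn : r ∣ n) : (ζ ^ j) ^ n = 1 := by
      rw [pow_right_comm, (hζ.pow_eq_one_iff_dvd n).2 hn, one_pow]
    refine ⟨?_, ?_⟩
    · rw [mul_pow, hζ_pow (hgcd ▸ Nat.gcd_dvd_right k N), one_mul, hx₀]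
    · rw [mul_pow, hζ_pow (hgcd ▸ Nat.gcd_dvd_left k N), one_mul]

theorem ncard_setOf_pow_eq_inter_mul_pow {F : Type*} [Field F] {N k m : ℕ} [NeZero m]
    {ζ c y : F} (hμ : IsPrimitiveRoot (ζ ^ k) m) (hζN : ζ ^ N = 1) (hcN : c ^ N = 1)
    (hck : c ^ k = 1) (hy : y ^ m = 1) :
    ({x : F | x ^ N = 1 ∧ x ^ k = y} ∩ {x | ∃ i < m, x = c * ζ ^ i}).ncard = 1 := by
  have hpow_k (i : ℕ) : (c * ζ ^ i) ^ k = (ζ ^ k) ^ i := by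
    rw [mul_pow, hck, one_mul, pow_right_comm]
  obtain ⟨i₀, hi₀, hμi₀⟩ := hμ.eq_pow_of_pow_eq_one hy
  rw [Set.ncard_eq_one]
  refine ⟨c * ζ ^ i₀, Set.ext fun x => ⟨?_, ?_⟩⟩
  · rintro ⟨⟨-, hxk⟩, i, hi, rfl⟩
    rw [hμ.pow_inj hi hi₀ (((hpow_k i).symm.trans hxk).trans hμi₀.symm)]
    rfl
  · rintro rfl
    refine ⟨⟨?_, (hpow_k i₀).trans hμi₀⟩, i₀, hi₀, rfl⟩
    rw [mul_pow, hcN, one_mul, pow_right_comm, hζN, one_pow]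

theorem stmt_10_general (q r : ℕ) (hdvd : r ∣ q + 1)
    (hν : padicValNat 2 r = padicValNat 2 (q + 1))
    (F : Type*) [Field F]
    (δ : F) (hδ : orderOf δ = r * (q ^ 2 + 1))
    (y₀ : F) (hy₀ : y₀ ^ (q ^ 2 + 1) = 1) :
    (∀ j < r, Set.ncard ({x : F | x ^ (r * (q ^ 2 + 1)) = 1 ∧ x ^ (q + 1) = y₀} ∩
        {x : F | ∃ i ≤ q ^ 2, x = (δ ^ (q ^ 2 + 1)) ^ j * δ⁻¹ ^ i}) = 1) ∧
    (∀ x₀ : F, x₀ ^ (r * (q ^ 2 + 1)) = 1 → x₀ ^ (q + 1) = y₀ →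
      {x : F | x ^ (r * (q ^ 2 + 1)) = 1 ∧ x ^ (q + 1) = y₀} =
        {x : F | ∃ j < r, x = (δ ^ (q ^ 2 + 1)) ^ j * x₀}) := by
  have hgcd := Nat.gcd_add_one_mul_sq_add_one hdvd hν
  have hδ_prim : IsPrimitiveRoot δ (r * (q ^ 2 + 1)) := hδ ▸ IsPrimitiveRoot.orderOf δ
  have hlam : IsPrimitiveRoot (δ ^ (q ^ 2 + 1)) r := by
    simpa using hδ_prim.pow_of_dvd (q ^ 2).succ_ne_zero (dvd_mul_left _ _)
  refine ⟨fun j _ => ?_, fun x₀ hx₀ hx₀y => ?_⟩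
  · have hμ : IsPrimitiveRoot (δ⁻¹ ^ (q + 1)) (q ^ 2 + 1) :=
      hδ_prim.inv.pow_of_gcd_eq q.succ_ne_zero hgcd
    have hlam_pow {n : ℕ} (hn : r ∣ n) : ((δ ^ (q ^ 2 + 1)) ^ j) ^ n = 1 := by
      rw [pow_right_comm, (hlam.pow_eq_one_iff_dvd n).2 hn, one_pow]
    simp_rw [← Nat.lt_add_one_iff]
    exact ncard_setOf_pow_eq_inter_mul_pow hμ hδ_prim.inv.pow_eq_one
      (hlam_pow (dvd_mul_right _ _)) (hlam_pow hdvd) hy₀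
  · subst hx₀y
    have hr : r ≠ 0 := by rintro rfl; simp at hdvd
    exact setOf_pow_eq_one_and_pow_eq_pow hlam hgcd (mul_ne_zero hr (q ^ 2).succ_ne_zero) hx₀

theorem stmt_10 (q r : ℕ) (hq : ∃ (p n : ℕ), p.Prime ∧ 0 < n ∧ q = p ^ n)
    (hr : 0 < r) (hdvd : r ∣ q + 1)
    (hν : padicValNat 2 r = padicValNat 2 (q + 1))
    (F : Type*) [Field F] [Fintype F] (hF : Fintype.card F = q ^ 4)
    (δ : F) (hδ : orderOf δ = r * (q ^ 2 + 1))
    (y₀ : F) (hy₀ : y₀ ^ (q ^ 2 + 1) = 1) :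
    (∀ j < r, Set.ncard ({x : F | x ^ (r * (q ^ 2 + 1)) = 1 ∧ x ^ (q + 1) = y₀} ∩
        {x : F | ∃ i ≤ q ^ 2, x = (δ ^ (q ^ 2 + 1)) ^ j * δ⁻¹ ^ i}) = 1) ∧
    (∀ x₀ : F, x₀ ^ (r * (q ^ 2 + 1)) = 1 → x₀ ^ (q + 1) = y₀ →
      {x : F | x ^ (r * (q ^ 2 + 1)) = 1 ∧ x ^ (q + 1) = y₀} =
        {x : F | ∃ j < r, x = (δ ^ (q ^ 2 + 1)) ^ j * x₀}) :=
  stmt_10_general q r hdvd hν F δ hδ y₀ hy₀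
end

section
/- Let q be a prime power and r a positive integer with r | (q-1) and ν₂(r) = ν₂(q-1). Let U_{r(q^2+1)} and U_{q^2+1} be the groups of r(q^2+1)-th and (q^2+1)-th roots of unity in F_{q^4}^*. Then the map h(x) = x^{q-1} is a surjective map from U_{r(q^2+1)} onto U_{q^2+1}, and each fiber has exactly r elements. -/
/-!
The `N`-th roots of unity, `N = r (q² + 1)`, form a cyclic group `μ_N` of order `N` in
`F_{q⁴}`, so `x ↦ x ^ (q - 1)` maps `μ_N` onto `μ_{N / g}`, with fibres the cosets of `μ_g`,
where `g = gcd(N, q - 1)`. Writing `q - 1 = r s`, the 2-adic hypothesis says `s` is odd, and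
`gcd(q² + 1, s)` divides `gcd(q² + 1, q² - 1) ∣ 2`, so `g = r` and `N / g = q² + 1`.
-/

theorem Nat.gcd_mul_sq_add_one_sub_one {q r : ℕ} (hq : 1 < q) (hdvd : r ∣ q - 1)
    (hν : padicValNat 2 r = padicValNat 2 (q - 1)) : (r * (q ^ 2 + 1)).gcd (q - 1) = r := by
  obtain ⟨s, hs⟩ := hdvd
  have hr : r ≠ 0 := by rintro rfl; omega
  have hs0 : s ≠ 0 := by rintro rfl; omega
  have hs_odd : Odd s := by
    have : padicValNat 2 s = 0 := by rw [hs, padicValNat.mul hr hs0] at hν; omega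
    rw [← Nat.not_even_iff_odd, even_iff_two_dvd, dvd_iff_padicValNat_ne_zero hs0]
    exact not_not.mpr this
  have hcop : (q ^ 2 + 1).Coprime s := by
    have hs_dvd : s ∣ q ^ 2 - 1 :=
      (Dvd.intro_left r hs.symm).trans (by simpa using Nat.sub_dvd_pow_sub_pow q 1 2)
    have hq2 : q ^ 2 + 1 = (q ^ 2 - 1) + 2 := by have := Nat.one_le_pow 2 q (by omega); omega
    refine Nat.eq_one_of_dvd_coprimes (Nat.coprime_two_left.mpr hs_odd) ?_ (Nat.gcd_dvd_right _ _)
    have hd := Nat.gcd_dvd_left (q ^ 2 + 1) s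
    rw [hq2] at hd ⊢
    exact (Nat.dvd_add_right ((Nat.gcd_dvd_right _ _).trans hs_dvd)).mp hd
  rw [hs, Nat.gcd_mul_left, hcop, mul_one]

theorem FiniteField.exists_isPrimitiveRoot_of_dvd_s11 (F : Type*) [Field F] [Fintype F] {n : ℕ}
    (hn : n ∣ Fintype.card F - 1) : ∃ ζ : F, IsPrimitiveRoot ζ n := by
  obtain ⟨g, hg⟩ := IsCyclic.exists_ofOrder_eq_natCard (α := Fˣ)
  have hg : IsPrimitiveRoot (g : F) (Fintype.card F - 1) := by
    rw [← Nat.card_eq_fintype_card, ← Nat.card_units, ← hg, ← orderOf_units]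
    exact IsPrimitiveRoot.orderOf _
  obtain ⟨c, hc⟩ := hn
  exact ⟨_, hg.pow (by have := Fintype.one_lt_card (α := F); omega) (hc.trans (mul_comm n c))⟩

theorem pow_pow_div_gcd_eq_one {M : Type*} [Monoid M] {x : M} {N : ℕ} (hx : x ^ N = 1)
    (e : ℕ) : (x ^ e) ^ (N / N.gcd e) = 1 := by
  rw [← pow_mul, ← Nat.mul_div_assoc _ (N.gcd_dvd_left e), mul_comm,
    Nat.mul_div_assoc _ (N.gcd_dvd_right e), pow_mul, hx, one_pow]

namespace IsPrimitiveRoot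

variable {N : ℕ}

theorem pow_div_gcd {M : Type*} [CommMonoid M] {ζ : M} (h : IsPrimitiveRoot ζ N) (hN : N ≠ 0)
    (e : ℕ) : IsPrimitiveRoot (ζ ^ e) (N / N.gcd e) := by
  rw [h.eq_orderOf, ← (h.isOfFinOrder hN).orderOf_pow]
  exact IsPrimitiveRoot.orderOf _

section IsDomain

variable {R : Type*} [CommRing R] [IsDomain R] {ζ : R}

theorem exists_pow_eq_of_pow_div_gcd_eq_one (h : IsPrimitiveRoot ζ N) (hN : N ≠ 0) (e : ℕ)
    {y : R} (hy : y ^ (N / N.gcd e) = 1) : ∃ x : R, x ^ N = 1 ∧ x ^ e = y := by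
  have : NeZero (N / N.gcd e) :=
    ⟨(Nat.div_pos (Nat.gcd_le_left e (by omega)) (Nat.gcd_pos_of_pos_left e (by omega))).ne'⟩
  obtain ⟨i, -, hi⟩ := (h.pow_div_gcd hN e).eq_pow_of_pow_eq_one hy
  refine ⟨ζ ^ i, ?_, ?_⟩
  · rw [← pow_mul, mul_comm, pow_mul, h.pow_eq_one, one_pow]
  · rw [← hi, ← pow_mul, ← pow_mul, mul_comm]

theorem ncard_setOf_pow_eq_one (h : IsPrimitiveRoot ζ N) (hN : N ≠ 0) :
    {x : R | x ^ N = 1}.ncard = N := by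
  have : {x : R | x ^ N = 1} = ↑(Polynomial.nthRootsFinset N (1 : R)) := by
    ext; simp [Polynomial.mem_nthRootsFinset (Nat.pos_of_ne_zero hN)]
  rw [this, Set.ncard_coe_finset, h.card_nthRootsFinset]

end IsDomain

theorem ncard_setOf_pow_eq_one_and_pow_eq_pow {F : Type*} [Field F] {ζ : F}
    (h : IsPrimitiveRoot ζ N) (hN : N ≠ 0) (e : ℕ) {x₀ : F} (hx₀ : x₀ ^ N = 1) :
    {x : F | x ^ N = 1 ∧ x ^ e = x₀ ^ e}.ncard = N.gcd e := by
  have hx₀0 : x₀ ≠ 0 := by rintro rfl; simp [zero_pow hN] at hx₀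
  have hfiber : {x : F | x ^ N = 1 ∧ x ^ e = x₀ ^ e} = (x₀ * ·) '' {u | u ^ N.gcd e = 1} := by
    ext x
    simp only [Set.mem_ofPred_eq, Set.mem_image, pow_gcd_eq_one]
    constructor
    · rintro ⟨hxN, hxe⟩
      exact ⟨x₀⁻¹ * x, by simp [mul_pow, hxN, hx₀, hxe, hx₀0], by field_simp⟩
    · rintro ⟨u, ⟨huN, hue⟩, rfl⟩
      simp [mul_pow, huN, hue, hx₀]
  have hgcd : IsPrimitiveRoot (ζ ^ (N / N.gcd e)) (N.gcd e) :=
    h.pow (Nat.pos_of_ne_zero hN) (Nat.div_mul_cancel (N.gcd_dvd_left e)).symm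
  rw [hfiber, Set.ncard_image_of_injective _ (mul_right_injective₀ hx₀0),
    hgcd.ncard_setOf_pow_eq_one (Nat.gcd_ne_zero_left hN)]

end IsPrimitiveRoot

theorem stmt_11_general (q r : ℕ)
    (hr : 0 < r) (hdvd : r ∣ q - 1)
    (hν : padicValNat 2 r = padicValNat 2 (q - 1))
    (F : Type*) [Field F] [Fintype F] (hF : Fintype.card F = q ^ 4) :
    (∀ x : F, x ^ (r * (q ^ 2 + 1)) = 1 → (x ^ (q - 1)) ^ (q ^ 2 + 1) = 1) ∧
    (∀ y : F, y ^ (q ^ 2 + 1) = 1 →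
      ∃ x : F, x ^ (r * (q ^ 2 + 1)) = 1 ∧ x ^ (q - 1) = y) ∧
    (∀ y : F, y ^ (q ^ 2 + 1) = 1 →
      Set.ncard {x : F | x ^ (r * (q ^ 2 + 1)) = 1 ∧ x ^ (q - 1) = y} = r) := by
  have hq : 1 < q := (Nat.one_lt_pow_iff (by norm_num)).mp (hF ▸ Fintype.one_lt_card)
  have hgcd := Nat.gcd_mul_sq_add_one_sub_one hq hdvd hν
  have hquot : r * (q ^ 2 + 1) / (r * (q ^ 2 + 1)).gcd (q - 1) = q ^ 2 + 1 := by
    rw [hgcd, Nat.mul_div_cancel_left _ hr]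
  have hN : r * (q ^ 2 + 1) ∣ Fintype.card F - 1 := by
    rw [hF, show q ^ 4 - 1 = (q ^ 2) ^ 2 - 1 ^ 2 by ring_nf, Nat.sq_sub_sq, mul_comm r]
    exact mul_dvd_mul_left _ (hdvd.trans (by simpa using Nat.sub_dvd_pow_sub_pow q 1 2))
  obtain ⟨ζ, hζ⟩ := FiniteField.exists_isPrimitiveRoot_of_dvd_s11 F hN
  have hN0 : r * (q ^ 2 + 1) ≠ 0 := by positivity
  refine ⟨fun x hx => ?_, fun y hy => ?_, fun y hy => ?_⟩
  · simpa [hquot] using pow_pow_div_gcd_eq_one hx (q - 1)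
  · exact hζ.exists_pow_eq_of_pow_div_gcd_eq_one hN0 _ (by rwa [hquot])
  · obtain ⟨x₀, hx₀, rfl⟩ :=
      hζ.exists_pow_eq_of_pow_div_gcd_eq_one hN0 (q - 1) (by rwa [hquot])
    rw [hζ.ncard_setOf_pow_eq_one_and_pow_eq_pow hN0 _ hx₀, hgcd]

theorem stmt_11 (q r : ℕ) (hq : ∃ (p n : ℕ), p.Prime ∧ 0 < n ∧ q = p ^ n)
    (hr : 0 < r) (hdvd : r ∣ q - 1)
    (hν : padicValNat 2 r = padicValNat 2 (q - 1))
    (F : Type*) [Field F] [Fintype F] (hF : Fintype.card F = q ^ 4) :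
    (∀ x : F, x ^ (r * (q ^ 2 + 1)) = 1 → (x ^ (q - 1)) ^ (q ^ 2 + 1) = 1) ∧
    (∀ y : F, y ^ (q ^ 2 + 1) = 1 →
      ∃ x : F, x ^ (r * (q ^ 2 + 1)) = 1 ∧ x ^ (q - 1) = y) ∧
    (∀ y : F, y ^ (q ^ 2 + 1) = 1 →
      Set.ncard {x : F | x ^ (r * (q ^ 2 + 1)) = 1 ∧ x ^ (q - 1) = y} = r) :=
  stmt_11_general q r hr hdvd hν F hF
end

section
/- Let q > 2 be a prime power and let U_{q^2+1} denote the (q^2+1)-th roots of unity in F_{q^4}^*. Suppose x₀, y₀ in U_{q^2+1} \ {1} satisfy x₀ ≠ y₀. Then (x₀^q - 1)(y₀^{q-1} - 1) ≠ (x₀^{q-1} - 1)(y₀^q - 1). -/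
theorem stmt_12 (q : ℕ) (hq : ∃ (p n : ℕ), p.Prime ∧ 0 < n ∧ q = p ^ n) (hq2 : 2 < q)
    (F : Type*) [Field F] [Fintype F] (hF : Fintype.card F = q ^ 4)
    (x₀ y₀ : F) (hx : x₀ ^ (q ^ 2 + 1) = 1) (hy : y₀ ^ (q ^ 2 + 1) = 1)
    (hx1 : x₀ ≠ 1) (hy1 : y₀ ≠ 1) (hxy : x₀ ≠ y₀) :
    (x₀ ^ q - 1) * (y₀ ^ (q - 1) - 1) ≠ (x₀ ^ (q - 1) - 1) * (y₀ ^ q - 1) := by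
  obtain ⟨p, n, hp, hn, hqpn⟩ := hq
  haveI := Fact.mk hp
  -- characteristic of F is p
  have hring : ringChar F = p := by
    have h2 : ringChar F ∣ q ^ 4 := by
      rw [← hF]; exact ringChar.dvd (FiniteField.cast_card_eq_zero F)
    have hprime : (ringChar F).Prime := CharP.char_is_prime F (ringChar F)
    have : ringChar F ∣ p := by
      rw [hqpn, ← pow_mul] at h2
      exact hprime.dvd_of_dvd_pow h2
    exact ((Nat.prime_dvd_prime_iff_eq hprime hp).mp this)
  haveI : CharP F p := ringChar.of_eq hring
  set f : F →+* F := iterateFrobenius F p n with hfdef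
  have hf : ∀ z : F, f z = z ^ q := fun z => by
    rw [hfdef, iterateFrobenius_def, hqpn]
  -- basic nonvanishing
  have hx0 : x₀ ≠ 0 := by
    intro h0; rw [h0, zero_pow (by positivity)] at hx; exact zero_ne_one hx
  have hy0 : y₀ ≠ 0 := by
    intro h0; rw [h0, zero_pow (by positivity)] at hy; exact zero_ne_one hy
  -- x₀ ^ (q^2) = x₀⁻¹
  have hxq2 : (x₀ ^ q) ^ q = x₀⁻¹ := by
    rw [← pow_mul, ← sq]
    field_simp
    rw [← pow_succ]
    exact hx
  have hyq2 : (y₀ ^ q) ^ q = y₀⁻¹ := by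
    rw [← pow_mul, ← sq]
    field_simp
    rw [← pow_succ]
    exact hy
  have hx' : x₀ ^ (q - 1) * x₀ = x₀ ^ q := by
    rw [← pow_succ]; congr 1; omega
  have hy' : y₀ ^ (q - 1) * y₀ = y₀ ^ q := by
    rw [← pow_succ]; congr 1; omega
  intro h
  -- E' : (A-1)(B - y)x = (A - x)(B-1)y
  have E1 : (x₀ ^ q - 1) * (y₀ ^ q - y₀) * x₀ = (x₀ ^ q - x₀) * (y₀ ^ q - 1) * y₀ := by
    linear_combination x₀ * y₀ * h - (x₀ ^ q - 1) * x₀ * hy' + (y₀ ^ q - 1) * y₀ * hx'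
  -- apply Frobenius
  have E2 := congrArg f E1
  simp only [map_mul, map_sub, map_one, map_pow] at E2
  simp only [hf] at E2
  rw [hxq2, hyq2] at E2
  -- E2 : (x₀⁻¹ - 1) * (y₀⁻¹ - y₀^q) * x₀^q = (x₀⁻¹ - x₀^q) * (y₀⁻¹ - 1) * y₀^q
  have E3 : (1 - x₀) * (1 - y₀ ^ q * y₀) * x₀ ^ q = (1 - x₀ ^ q * x₀) * (1 - y₀) * y₀ ^ q := by
    have := congrArg (· * (x₀ * y₀)) E2
    field_simp at this
    linear_combination this
  have E4 := congrArg f E3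
  simp only [map_mul, map_sub, map_one, map_pow] at E4
  simp only [hf] at E4
  rw [hxq2, hyq2] at E4
  -- E4 : (1 - x₀^q) * (1 - y₀⁻¹ * y₀^q) * x₀⁻¹ = (1 - x₀⁻¹ * x₀^q) * (1 - y₀^q) * y₀⁻¹
  have E5 : (x₀ ^ q - 1) * (y₀ ^ q - y₀) * (x₀ * y₀) = (x₀ ^ q - x₀) * (y₀ ^ q - 1) * (x₀ * y₀) := by
    have := congrArg (· * (x₀ * y₀)) E4
    field_simp at this
    linear_combination (x₀ * y₀) * this
  have E6 : (x₀ ^ q - 1) * (y₀ ^ q - y₀) = (x₀ ^ q - x₀) * (y₀ ^ q - 1) :=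
    mul_right_cancel₀ (mul_ne_zero hx0 hy0) E5
  -- combine E1 and E6
  have key : (x₀ ^ q - x₀) * (y₀ ^ q - 1) * (y₀ - x₀) = 0 := by
    linear_combination x₀ * E6 - E1
  rcases mul_eq_zero.mp key with h1 | h2
  · rcases mul_eq_zero.mp h1 with hA | hB
    · -- x₀^q = x₀
      have hxA : x₀ ^ q = x₀ := sub_eq_zero.mp hA
      have hx2 : x₀ * x₀ = 1 := by
        have h' : x₀⁻¹ = x₀ := by rw [← hxq2, hxA, hxA]
        nth_rewrite 2 [← h']
        exact mul_inv_cancel₀ hx0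
      have hxneg : x₀ = -1 := by
        have := mul_self_eq_one_iff.mp hx2
        tauto
      -- then from E5, (x₀ - 1)(y₀^q - y₀) = 0
      have hyB : y₀ ^ q = y₀ := by
        have h5 : (x₀ - 1) * (y₀ ^ q - y₀) = 0 := by
          linear_combination E6 + ((y₀ ^ q - 1) - (y₀ ^ q - y₀)) * hA
        rcases mul_eq_zero.mp h5 with h6 | h7
        · exact absurd (by linear_combination h6) hx1
        · linear_combination h7
      have hy2 : y₀ * y₀ = 1 := by
        have h' : y₀⁻¹ = y₀ := by rw [← hyq2, hyB, hyB]
        nth_rewrite 2 [← h']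
        exact mul_inv_cancel₀ hy0
      have hyneg : y₀ = -1 := by
        have := mul_self_eq_one_iff.mp hy2
        tauto
      exact hxy (hxneg.trans hyneg.symm)
    · -- y₀^q = 1
      have hyq : y₀ ^ q = 1 := by linear_combination hB
      have : y₀ = 1 := by
        have h1 : y₀ ^ (q ^ 2 + 1) = y₀ := by
          rw [pow_succ, sq, pow_mul, hyq, one_pow, one_mul]
        rw [hy] at h1
        exact h1.symm
      exact hy1 this
  · exact hxy (sub_eq_zero.mp h2).symm
end

section
/- Let q be a prime power, F_{q^4} the field with q^4 elements, and x in F_{q^4}^* an element lying in the set T = {δ^{-i} : 0 ≤ i ≤ q^2}, where δ has order r(q^2+1), with r | q+1 and ν₂(r) = ν₂(q+1). If x ≠ 1 then x^{q^2+q} ≠ 1. -/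
lemma arith_aux (q r i : ℕ) (hq2 : 2 ≤ q) (hr : 0 < r) (hdvd : r ∣ q + 1)
    (ha : 2 ^ padicValNat 2 (q + 1) ∣ r) (hi0 : 0 < i) (hile : i ≤ q ^ 2)
    (h : r * (q ^ 2 + 1) ∣ i * (q ^ 2 + q)) : False := by
  obtain ⟨k, rfl⟩ : ∃ k, q = k + 2 := ⟨q - 2, by omega⟩
  set q := k + 2 with hqdef
  -- any common divisor of q^2+1 and q+1 divides 2
  have key : ∀ g : ℕ, g ∣ q ^ 2 + 1 → g ∣ q + 1 → g ∣ 2 := by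
    intro g h1 h2
    have e : q ^ 2 + 1 - (k + 1) * (q + 1) = 2 := by
      have : (k + 1) * (q + 1) + 2 = q ^ 2 + 1 := by ring
      omega
    have := Nat.dvd_sub h1 (h2.mul_left (k + 1))
    rwa [e] at this
  -- q^2+1 divides i*(q+1)
  have hcopq : Nat.Coprime (q ^ 2 + 1) q := by
    have h' : Nat.gcd q (1 + q * q) = 1 := by
      rw [Nat.gcd_add_mul_right_right q 1 q, Nat.gcd_one_right]
    have e : q ^ 2 + 1 = 1 + q * q := by ring
    rw [e]
    exact Nat.coprime_comm.mp h'
  have h1 : q ^ 2 + 1 ∣ i * (q + 1) := by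
    have hd : q ^ 2 + 1 ∣ (i * (q + 1)) * q := by
      have e : (i * (q + 1)) * q = i * (q ^ 2 + q) := by ring
      rw [e]
      exact (dvd_mul_left _ r).trans h
    exact Nat.Coprime.dvd_of_dvd_mul_right hcopq hd
  have contra : ¬ (q ^ 2 + 1 ∣ i) := by
    intro hd
    have := Nat.le_of_dvd hi0 hd
    omega
  rcases Nat.even_or_odd q with hev | hodd
  · -- q even: q^2+1 coprime to q+1
    have hodd1 : ¬ 2 ∣ (q ^ 2 + 1) := by
      obtain ⟨t, ht⟩ := hev
      have : q ^ 2 + 1 = 2 * (2 * (t * t)) + 1 := by rw [ht]; ring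
      omega
    have hcop : Nat.Coprime (q ^ 2 + 1) (q + 1) := by
      have hg := key _ (Nat.gcd_dvd_left (q ^ 2 + 1) (q + 1)) (Nat.gcd_dvd_right _ _)
      rcases (Nat.prime_two.eq_one_or_self_of_dvd _ hg) with h' | h'
      · exact h'
      · have hgl := Nat.gcd_dvd_left (q ^ 2 + 1) (q + 1)
        rw [h'] at hgl
        exact absurd hgl hodd1
    exact contra (Nat.Coprime.dvd_of_dvd_mul_right hcop h1)
  · -- q odd
    obtain ⟨t, ht⟩ := hodd
    set m := 2 * t * t + 2 * t + 1 with hmdef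
    have hm : q ^ 2 + 1 = 2 * m := by rw [ht, hmdef]; ring
    obtain ⟨w, hw⟩ : ∃ w, m = 2 * w + 1 := ⟨t * t + t, by rw [hmdef]; ring⟩
    have hmodd : ¬ 2 ∣ m := by omega
    have hmpos : 0 < m := by omega
    -- m coprime to q+1
    have hcopm : Nat.Coprime m (q + 1) := by
      have hg := key (Nat.gcd m (q + 1))
        ((Nat.gcd_dvd_left m (q + 1)).trans ⟨2, by omega⟩)
        (Nat.gcd_dvd_right _ _)
      rcases (Nat.prime_two.eq_one_or_self_of_dvd _ hg) with h' | h'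
      · exact h'
      · have hgl := Nat.gcd_dvd_left m (q + 1)
        rw [h'] at hgl
        exact absurd hgl hmodd
    have hmi : m ∣ i := by
      refine Nat.Coprime.dvd_of_dvd_mul_right hcopm ?_
      exact (dvd_mul_left m 2).trans (hm ▸ h1)
    obtain ⟨j, rfl⟩ := hmi
    -- 2*r ∣ j * (q * (q+1))
    have h2r : 2 * r ∣ j * (q * (q + 1)) := by
      have h' : m * (2 * r) ∣ m * (j * (q * (q + 1))) := by
        have e1 : m * (2 * r) = r * (q ^ 2 + 1) := by rw [hm]; ring
        have e2 : m * (j * (q * (q + 1))) = (m * j) * (q ^ 2 + q) := by ring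
        rw [e1, e2]; exact h
      exact (Nat.mul_dvd_mul_iff_left hmpos).mp h'
    -- decompose q+1 = 2^a * s with s odd
    set a := padicValNat 2 (q + 1) with hadef
    obtain ⟨s, hs⟩ : 2 ^ a ∣ q + 1 := pow_padicValNat_dvd
    have hsodd : ¬ 2 ∣ s := by
      rintro ⟨u, hu⟩
      have hd : 2 ^ (a + 1) ∣ q + 1 := ⟨u, by rw [hs, hu]; ring⟩
      exact pow_succ_padicValNat_not_dvd (by omega : q + 1 ≠ 0) hd
    -- 2 ∣ j
    have h2j : 2 ∣ j := by
      have hpow : 2 ^ a * 2 ∣ 2 ^ a * (j * q * s) := by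
        have e1 : 2 ^ a * (j * q * s) = j * (q * (q + 1)) := by rw [hs]; ring
        have h2 : 2 * (2 ^ a) ∣ 2 * r := mul_dvd_mul_left 2 ha
        rw [e1]
        exact (by rw [mul_comm]; exact h2 : 2 ^ a * 2 ∣ 2 * r).trans h2r
      have h2' : 2 ∣ j * q * s :=
        (Nat.mul_dvd_mul_iff_left (pow_pos two_pos a)).mp hpow
      rcases (Nat.prime_two.dvd_mul.mp h2') with h' | h'
      · rcases (Nat.prime_two.dvd_mul.mp h') with h'' | h''
        · exact h''
        · exfalso; omega
      · exact absurd h' hsodd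
    obtain ⟨u, rfl⟩ := h2j
    exact contra ⟨u, by rw [hm]; ring⟩

theorem stmt_14 (q r : ℕ) (hq : ∃ (p n : ℕ), p.Prime ∧ 0 < n ∧ q = p ^ n)
    (hr : 0 < r) (hdvd : r ∣ q + 1)
    (hν : padicValNat 2 r = padicValNat 2 (q + 1))
    (F : Type*) [Field F] [Fintype F] (hF : Fintype.card F = q ^ 4)
    (δ : F) (hδ : orderOf δ = r * (q ^ 2 + 1))
    (x : F) (hx : ∃ i ≤ q ^ 2, x = δ⁻¹ ^ i) (hx1 : x ≠ 1) :
    x ^ (q ^ 2 + q) ≠ 1 := by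
  obtain ⟨p, n, hp, hn, rfl⟩ := hq
  have hq2 : 2 ≤ p ^ n := by
    calc 2 ≤ p := hp.two_le
    _ ≤ p ^ n := Nat.le_self_pow hn.ne' p
  obtain ⟨i, hi, rfl⟩ := hx
  intro hone
  have hi0 : 0 < i := by
    rcases Nat.eq_zero_or_pos i with rfl | h
    · simp at hx1
    · exact h
  have hdvd1 : r * ((p ^ n) ^ 2 + 1) ∣ i * ((p ^ n) ^ 2 + p ^ n) := by
    rw [← hδ]
    apply orderOf_dvd_of_pow_eq_one
    rw [← pow_mul, inv_pow, inv_eq_one] at hone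
    exact hone
  have ha : 2 ^ padicValNat 2 (p ^ n + 1) ∣ r := by
    rw [← hν]; exact pow_padicValNat_dvd
  exact arith_aux (p ^ n) r i hq2 hr hdvd ha hi0 hi hdvd1
end
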